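/- arXiv:2208.06589 — 6 statements merged into one kernel-verified Lean document; each statement's English description precedes it below -/
import Mathlib

section
/- Let M ⊆ ℝⁿ be X-convex with respect to g, and let ν > 0 satisfy ‖δ(s - r) + g(r) - r‖ < ν for all s, r ∈ M and δ ∈ [0,1]. If φ : M → ℝ is X-convex with respect to g and r ∈ M is a local minimum of φ in the sense that φ(r) ≤ φ(t) for all t ∈ M with ‖t - r‖ < ν, then r is a global minimum of φ over M. -/
/-- Every local minimum of an X-convex function is a global minimum. -/
theorem localMin_is_globalMin_XConvex {n : ℕ} (M : Set (EuclideanSpace ℝ (Fin n)))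
    (g : EuclideanSpace ℝ (Fin n) → EuclideanSpace ℝ (Fin n))
    (φ : EuclideanSpace ℝ (Fin n) → ℝ) (ν : ℝ) (hν : 0 < ν)
    (hMg : ∀ s ∈ M, ∀ r ∈ M, ∀ δ ∈ Set.Icc (0 : ℝ) 1, δ • (s - r) + g r ∈ M)
    (hbound : ∀ s ∈ M, ∀ r ∈ M, ∀ δ ∈ Set.Icc (0 : ℝ) 1,
      ‖δ • (s - r) + g r - r‖ < ν)
    (hφ : ∀ s ∈ M, ∀ r ∈ M, ∀ δ ∈ Set.Icc (0 : ℝ) 1,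
      φ (δ • (s - r) + g r) ≤ δ * φ s + (1 - δ) * φ r)
    (r : EuclideanSpace ℝ (Fin n)) (hr : r ∈ M)
    (hloc : ∀ t ∈ M, ‖t - r‖ < ν → φ r ≤ φ t) :
    ∀ t ∈ M, φ r ≤ φ t := by
  intro t ht
  have h1 : (1 : ℝ) ∈ Set.Icc (0 : ℝ) 1 := by constructor <;> norm_num
  have hmem := hMg t ht r hr 1 h1
  have hb := hbound t ht r hr 1 h1
  have hc := hφ t ht r hr 1 h1
  have := hloc _ hmem hb
  linarith
end

section
/- Let M ⊆ ℝⁿ be X-convex with respect to g, and let ν > 0 satisfy ‖δ(s - r) + g(r) - r‖ < ν for all s, r ∈ M and δ ∈ [0,1]. If φ : M → ℝ is strictly X-convex with respect to g and r ∈ M is a local minimum of φ (φ(r) ≤ φ(t) for all t ∈ M with ‖t - r‖ < ν), then r is the unique global minimum of φ over M. -/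
/-- A local minimum of a strictly X-convex function is the unique global minimum. -/
theorem localMin_unique_globalMin_strictXConvex {n : ℕ}
    (M : Set (EuclideanSpace ℝ (Fin n)))
    (g : EuclideanSpace ℝ (Fin n) → EuclideanSpace ℝ (Fin n))
    (φ : EuclideanSpace ℝ (Fin n) → ℝ) (ν : ℝ) (hν : 0 < ν)
    (hMg : ∀ s ∈ M, ∀ r ∈ M, ∀ δ ∈ Set.Icc (0 : ℝ) 1, δ • (s - r) + g r ∈ M)
    (hbound : ∀ s ∈ M, ∀ r ∈ M, ∀ δ ∈ Set.Icc (0 : ℝ) 1,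
      ‖δ • (s - r) + g r - r‖ < ν)
    (hφ : ∀ s ∈ M, ∀ r ∈ M, s ≠ r → ∀ δ ∈ Set.Ioo (0 : ℝ) 1,
      φ (δ • (s - r) + g r) < δ * φ s + (1 - δ) * φ r)
    (r : EuclideanSpace ℝ (Fin n)) (hr : r ∈ M)
    (hloc : ∀ t ∈ M, ‖t - r‖ < ν → φ r ≤ φ t) :
    (∀ t ∈ M, φ r ≤ φ t) ∧
      ∀ t ∈ M, (∀ s ∈ M, φ t ≤ φ s) → t = r := by
  have key : ∀ t ∈ M, t ≠ r → φ r < φ t := by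
    intro t ht hne
    have hδ : (1/2 : ℝ) ∈ Set.Ioo (0:ℝ) 1 := by norm_num
    have hδ' : (1/2 : ℝ) ∈ Set.Icc (0:ℝ) 1 := by norm_num
    have hp : (1/2 : ℝ) • (t - r) + g r ∈ M := hMg t ht r hr _ hδ'
    have hb := hbound t ht r hr _ hδ'
    have h1 := hloc _ hp hb
    have h2 := hφ t ht r hr hne _ hδ
    linarith
  constructor
  · intro t ht
    rcases eq_or_ne t r with h | h
    · simp [h]
    · exact (key t ht h).le
  · intro t ht hmin
    by_contra hne
    exact absurd (hmin r hr) (not_le.mpr (key t ht hne))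
end

section
/- Let M ⊆ ℝⁿ be X-convex with respect to g and ν > 0 satisfy ‖δ(s - r) + g(r) - r‖ < ν for all s, r ∈ M, δ ∈ [0,1]. If φ : M → ℝ is quasi-X-convex with respect to g and r ∈ M is a strict local minimum (φ(r) < φ(t) for all t ∈ M \ {r} with ‖t - r‖ < ν), then r is a strict global minimum of φ over M. -/
/-- A strict local minimum of a quasi-X-convex function is a strict global minimum. -/
theorem strictLocalMin_strictGlobalMin_quasiXConvex {n : ℕ}
    (M : Set (EuclideanSpace ℝ (Fin n)))
    (g : EuclideanSpace ℝ (Fin n) → EuclideanSpace ℝ (Fin n))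
    (φ : EuclideanSpace ℝ (Fin n) → ℝ) (ν : ℝ) (hν : 0 < ν)
    (hMg : ∀ s ∈ M, ∀ r ∈ M, ∀ δ ∈ Set.Icc (0 : ℝ) 1, δ • (s - r) + g r ∈ M)
    (hbound : ∀ s ∈ M, ∀ r ∈ M, ∀ δ ∈ Set.Icc (0 : ℝ) 1,
      ‖δ • (s - r) + g r - r‖ < ν)
    (hφ : ∀ s ∈ M, ∀ r ∈ M, ∀ δ ∈ Set.Icc (0 : ℝ) 1,
      φ (δ • (s - r) + g r) ≤ max (φ s) (φ r))
    (r : EuclideanSpace ℝ (Fin n)) (hr : r ∈ M)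
    (hloc : ∀ t ∈ M, t ≠ r → ‖t - r‖ < ν → φ r < φ t) :
    ∀ t ∈ M, t ≠ r → φ r < φ t := by
  intro t ht htr
  by_contra h
  push_neg at h
  have h01 : (0:ℝ) ∈ Set.Icc (0:ℝ) 1 := by norm_num
  have h11 : (1:ℝ) ∈ Set.Icc (0:ℝ) 1 := by norm_num
  -- first show g r = r
  have hgr : g r = r := by
    by_contra hgr
    have hmem := hMg r hr r hr 0 h01
    have hb := hbound r hr r hr 0 h01
    have hf := hφ r hr r hr 0 h01
    simp only [zero_smul, zero_add, max_self] at hmem hb hf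
    exact absurd (hloc _ hmem hgr hb) (not_lt.2 hf)
  have hmem := hMg t ht r hr 1 h11
  have hb := hbound t ht r hr 1 h11
  have hf := hφ t ht r hr 1 h11
  rw [hgr, one_smul, sub_add_cancel] at hmem hb hf
  exact absurd (hloc _ hmem htr hb) (not_lt.2 (le_trans hf (max_le h le_rfl)))
end

section
/- A strictly quasi-X-convex function φ : M → ℝ on a non-empty X-convex set M (with the extra hypothesis that for all u₁ ≠ u₂ in M and δ ∈ (0,1), δ(u₁ - u₂) + g(u₂) ∈ M) attains its minimum over M at most at one point; i.e., if u₁ and u₂ are both global minimizers of φ over M, then u₁ = u₂. -/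
/-- A strictly quasi-X-convex function attains its minimum at most at one point. -/
theorem strictQuasiXConvex_min_unique {n : ℕ} (M : Set (EuclideanSpace ℝ (Fin n)))
    (g : EuclideanSpace ℝ (Fin n) → EuclideanSpace ℝ (Fin n))
    (φ : EuclideanSpace ℝ (Fin n) → ℝ)
    (hM : M.Nonempty)
    (hMg : ∀ u₁ ∈ M, ∀ u₂ ∈ M, u₁ ≠ u₂ → ∀ δ ∈ Set.Ioo (0 : ℝ) 1,
      δ • (u₁ - u₂) + g u₂ ∈ M)
    (hφ : ∀ r ∈ M, ∀ t ∈ M, r ≠ t → ∀ δ ∈ Set.Ioo (0 : ℝ) 1,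
      φ (δ • (r - t) + g t) < max (φ r) (φ t)) :
    ∀ u₁ ∈ M, ∀ u₂ ∈ M, (∀ t ∈ M, φ u₁ ≤ φ t) → (∀ t ∈ M, φ u₂ ≤ φ t) →
      u₁ = u₂ := by
  intro u₁ h₁ u₂ h₂ hmin₁ hmin₂
  by_contra hne
  have hδ : (1/2 : ℝ) ∈ Set.Ioo (0:ℝ) 1 := by norm_num
  have hmem := hMg u₁ h₁ u₂ h₂ hne (1/2) hδ
  have hlt := hφ u₁ h₁ u₂ h₂ hne (1/2) hδ
  have := hmin₁ _ hmem
  have := hmin₂ _ hmem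
  rcases max_cases (φ u₁) (φ u₂) with ⟨h, _⟩ | ⟨h, _⟩ <;> rw [h] at hlt <;> linarith
end

section
/- Consider the multi-objective problem of minimizing φ = (φ₁, ..., φ_p) over an X-convex set M with respect to g. Suppose each φᵢ is quasi-X-convex with respect to g, φ_k is strictly quasi-X-convex with respect to g for some index k, and μ = (μ₁, ..., μ_p) ≥ 0 with μ_k > 0. If r ∈ M is a global minimizer of the scalarized function μᵀφ over M, then r is a global efficient solution of the multi-objective problem; i.e., there is no t ∈ M with φᵢ(t) ≤ φᵢ(r) for all i and φ(t) ≠ φ(r). -/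
/-- A global minimizer of a scalarization μᵀφ (with each φᵢ quasi-X-convex and some
φₖ strictly quasi-X-convex, μ ≥ 0, μₖ > 0) is a global efficient solution of the
multi-objective problem. -/
theorem scalarization_global_efficient {n p : ℕ}
    (M : Set (EuclideanSpace ℝ (Fin n)))
    (g : EuclideanSpace ℝ (Fin n) → EuclideanSpace ℝ (Fin n))
    (φ : Fin p → EuclideanSpace ℝ (Fin n) → ℝ) (μ : Fin p → ℝ) (k : Fin p)
    (hMg : ∀ r ∈ M, ∀ t ∈ M, ∀ δ ∈ Set.Icc (0 : ℝ) 1, δ • (r - t) + g t ∈ M)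
    (hquasi : ∀ i, ∀ r ∈ M, ∀ t ∈ M, ∀ δ ∈ Set.Icc (0 : ℝ) 1,
      φ i (δ • (r - t) + g t) ≤ max (φ i r) (φ i t))
    (hstrict : ∀ r ∈ M, ∀ t ∈ M, r ≠ t → ∀ δ ∈ Set.Ioo (0 : ℝ) 1,
      φ k (δ • (r - t) + g t) < max (φ k r) (φ k t))
    (hμ : ∀ i, 0 ≤ μ i) (hμk : 0 < μ k)
    (r : EuclideanSpace ℝ (Fin n)) (hr : r ∈ M)
    (hmin : ∀ t ∈ M, (∑ i, μ i * φ i r) ≤ (∑ i, μ i * φ i t)) :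
    ¬ ∃ t ∈ M, (∀ i, φ i t ≤ φ i r) ∧ (∃ j, φ j t ≠ φ j r) := by
  rintro ⟨t, ht, hle, j, hj⟩
  have htr : t ≠ r := fun h => hj (by rw [h])
  set z := (1/2 : ℝ) • (t - r) + g r with hz
  have hδ : (1/2 : ℝ) ∈ Set.Icc (0:ℝ) 1 := by norm_num
  have hzM : z ∈ M := hMg t ht r hr _ hδ
  have hle' : ∀ i, φ i z ≤ φ i r := fun i => by
    have := hquasi i t ht r hr _ hδ
    simpa [hz, one_div, max_eq_right (hle i)] using this
  have hk : φ k z < φ k r := by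
    have := hstrict t ht r hr htr (1/2) (by norm_num)
    simpa [hz, one_div, max_eq_right (hle k)] using this
  have hsum : (∑ i, μ i * φ i z) < ∑ i, μ i * φ i r := by
    apply Finset.sum_lt_sum (fun i _ => mul_le_mul_of_nonneg_left (hle' i) (hμ i))
    exact ⟨k, Finset.mem_univ k, by exact mul_lt_mul_of_pos_left hk hμk⟩
  exact absurd (hmin z hzM) (not_le.mpr hsum)
end

section
/- If φ : M → ℝ is strictly quasi-X-convex with respect to g on an X-convex set M ⊆ ℝⁿ, then the minimization problem min φ(r), r ∈ M, has at most one solution: if r and t are both global minimizers of φ over M, then r = t. -/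
/-- The minimization of a strictly quasi-X-convex function over an X-convex set has
at most one solution. -/
theorem strictQuasiXConvex_unique_solution {n : ℕ}
    (M : Set (EuclideanSpace ℝ (Fin n)))
    (g : EuclideanSpace ℝ (Fin n) → EuclideanSpace ℝ (Fin n))
    (φ : EuclideanSpace ℝ (Fin n) → ℝ)
    (hM : M.Nonempty)
    (hMg : ∀ r ∈ M, ∀ t ∈ M, ∀ δ ∈ Set.Icc (0 : ℝ) 1, δ • (r - t) + g t ∈ M)
    (hφ : ∀ r ∈ M, ∀ t ∈ M, r ≠ t → ∀ δ ∈ Set.Ioo (0 : ℝ) 1,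
      φ (δ • (r - t) + g t) < max (φ r) (φ t)) :
    ∀ r ∈ M, ∀ t ∈ M, (∀ s ∈ M, φ r ≤ φ s) → (∀ s ∈ M, φ t ≤ φ s) →
      r = t := by
  intro r hr t ht hmr hmt
  by_contra hne
  have hp : (1/2 : ℝ) • (r - t) + g t ∈ M :=
    hMg r hr t ht (1/2) (by constructor <;> norm_num)
  have h1 := hφ r hr t ht hne (1/2) (by constructor <;> norm_num)
  have h2 := hmr _ hp
  have h3 := hmt _ hp
  have : max (φ r) (φ t) ≤ φ ((1/2 : ℝ) • (r - t) + g t) := max_le h2 h3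
  linarith
end
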